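/- For every frequency ω ∈ (0,∞), the two variational values coincide: γ_ω = β_ω, where γ_ω is the infimum of the action S_ω over nonzero H^1(ℝ^d×T^m)-functions with vanishing virial functional K, and β_ω is the infimum of S_ω over nonzero functions with vanishing Nehari functional N_ω. -/

import Mathlib

open MeasureTheory Real Filter Topology

noncomputable section

namespace NLS

/-- Points of `ℝ^d × ℝ^m`; functions that are `2π`-periodic in the second
variable model functions on the waveguide `ℝ^d × 𝕋^m`, `𝕋 = ℝ/2πℤ`. -/
abbrev Pt (d m : ℕ) := (Fin d → ℝ) × (Fin m → ℝ)

/-- Fundamental domain `ℝ^d × [0,2π)^m`. -/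
def fundDom (d m : ℕ) : Set (Pt d m) :=
  Set.univ ×ˢ Set.pi Set.univ fun _ => Set.Ico (0 : ℝ) (2 * π)

/-- The measure on the waveguide: Lebesgue measure restricted to a fundamental domain. -/
def μw (d m : ℕ) : Measure (Pt d m) := volume.restrict (fundDom d m)

/-- `2π`-periodicity in the torus variables. -/
def IsPeriodic {d m : ℕ} (u : Pt d m → ℂ) : Prop :=
  ∀ (p : Pt d m) (k : Fin m → ℤ), u (p.1, p.2 + fun i => 2 * π * (k i : ℝ)) = u p

/-- The `i`-th partial derivative in the `x` variables. -/
def dX {d m : ℕ} (u : Pt d m → ℂ) (p : Pt d m) (i : Fin d) : ℂ :=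
  fderiv ℝ u p (Pi.single i 1, 0)

/-- The `j`-th partial derivative in the `y` variables. -/
def dY {d m : ℕ} (u : Pt d m → ℂ) (p : Pt d m) (j : Fin m) : ℂ :=
  fderiv ℝ u p (0, Pi.single j 1)

/-- `‖∇ₓ u‖_{L²}²`. -/
def gradXsq (d m : ℕ) (u : Pt d m → ℂ) : ℝ :=
  ∫ p, (∑ i, ‖dX u p i‖ ^ 2) ∂(μw d m)

/-- `‖∇_y u‖_{L²}²`. -/
def gradYsq (d m : ℕ) (u : Pt d m → ℂ) : ℝ :=
  ∫ p, (∑ j, ‖dY u p j‖ ^ 2) ∂(μw d m)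

/-- The mass `M(u) = ‖u‖_{L²}²`. -/
def Mass (d m : ℕ) (u : Pt d m → ℂ) : ℝ :=
  ∫ p, ‖u p‖ ^ 2 ∂(μw d m)

/-- `‖u‖_{L^{α+2}}^{α+2}`. -/
def Pot (d m : ℕ) (α : ℝ) (u : Pt d m → ℂ) : ℝ :=
  ∫ p, ‖u p‖ ^ (α + 2) ∂(μw d m)

/-- Membership in `H^1(ℝ^d×𝕋^m) ∩ L^{α+2}` (with a differentiable representative). -/
structure InH1 (d m : ℕ) (α : ℝ) (u : Pt d m → ℂ) : Prop where
  diff : Differentiable ℝ u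
  periodic : IsPeriodic u
  memL2 : Integrable (fun p => ‖u p‖ ^ 2) (μw d m)
  memGradL2 : Integrable (fun p => ‖fderiv ℝ u p‖ ^ 2) (μw d m)
  memLp : Integrable (fun p => ‖u p‖ ^ (α + 2)) (μw d m)

/-- The energy `E(u)`. -/
def En (d m : ℕ) (α : ℝ) (u : Pt d m → ℂ) : ℝ :=
  (gradXsq d m u + gradYsq d m u) / 2 - Pot d m α u / (α + 2)

/-- The action `S_ω(u) = E(u) + (ω/2) M(u)`. -/
def Sw (d m : ℕ) (α ω : ℝ) (u : Pt d m → ℂ) : ℝ :=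
  En d m α u + ω / 2 * Mass d m u

/-- The virial functional `K(u)`. -/
def Kw (d m : ℕ) (α : ℝ) (u : Pt d m → ℂ) : ℝ :=
  gradXsq d m u - α * d / (2 * (α + 2)) * Pot d m α u

/-- The Nehari functional `N_ω(u)`. -/
def Nw (d m : ℕ) (α ω : ℝ) (u : Pt d m → ℂ) : ℝ :=
  ω * Mass d m u + gradXsq d m u + gradYsq d m u - Pot d m α u

/-- Values of the action on the virial-vanishing constraint set. -/
def gammaSet (d m : ℕ) (α ω : ℝ) : Set ℝ :=
  Sw d m α ω '' {u | InH1 d m α u ∧ u ≠ 0 ∧ Kw d m α u = 0}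

/-- `γ_ω = inf {S_ω(u) : u ∈ H¹∖{0}, K(u) = 0}`. -/
def gamma (d m : ℕ) (α ω : ℝ) : ℝ := sInf (gammaSet d m α ω)

/-- Values of the action on the Nehari constraint set. -/
def betaSet (d m : ℕ) (α ω : ℝ) : Set ℝ :=
  Sw d m α ω '' {u | InH1 d m α u ∧ u ≠ 0 ∧ Nw d m α ω u = 0}

/-- `β_ω = inf {S_ω(u) : u ∈ H¹∖{0}, N_ω(u) = 0}`. -/
def beta (d m : ℕ) (α ω : ℝ) : ℝ := sInf (betaSet d m α ω)

/-- `m_c = inf {E(u) : u ∈ H¹, M(u) = c, K(u) = 0}`. -/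
def mc (d m : ℕ) (α c : ℝ) : ℝ :=
  sInf (En d m α '' {u | InH1 d m α u ∧ Mass d m u = c ∧ Kw d m α u = 0})

/-- `u` is a minimizer for the problem `γ_ω`. -/
def IsGammaMin (d m : ℕ) (α ω : ℝ) (u : Pt d m → ℂ) : Prop :=
  InH1 d m α u ∧ u ≠ 0 ∧ Kw d m α u = 0 ∧ Sw d m α ω u = gamma d m α ω

/-- `u` is a minimizer for the problem `β_ω`. -/
def IsBetaMin (d m : ℕ) (α ω : ℝ) (u : Pt d m → ℂ) : Prop :=
  InH1 d m α u ∧ u ≠ 0 ∧ Nw d m α ω u = 0 ∧ Sw d m α ω u = beta d m α ω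

/-- `u` is a minimizer for the problem `m_c`. -/
def IsMcMin (d m : ℕ) (α c : ℝ) (u : Pt d m → ℂ) : Prop :=
  InH1 d m α u ∧ Mass d m u = c ∧ Kw d m α u = 0 ∧ En d m α u = mc d m α c

/-- Iterated directional derivative. -/
def d2 {d m : ℕ} (u : Pt d m → ℂ) (p v : Pt d m) : ℂ :=
  fderiv ℝ (fun q => fderiv ℝ u q v) p v

/-- The Laplacian in the `x` variables. -/
def lapX {d m : ℕ} (u : Pt d m → ℂ) (p : Pt d m) : ℂ :=
  ∑ i, d2 u p (Pi.single i 1, 0)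

/-- The Laplacian in the `y` variables. -/
def lapY {d m : ℕ} (u : Pt d m → ℂ) (p : Pt d m) : ℂ :=
  ∑ j, d2 u p (0, Pi.single j 1)

/-- The full Laplacian `Δ_{x,y}`. -/
def lap {d m : ℕ} (u : Pt d m → ℂ) (p : Pt d m) : ℂ := lapX u p + lapY u p

/-- `u` solves the stationary equation `-Δ_{x,y} u + ω u = |u|^α u`. -/
def SolvesStat (d m : ℕ) (α ω : ℝ) (u : Pt d m → ℂ) : Prop :=
  ∀ p, -lap u p + (ω : ℂ) * u p = (↑(‖u p‖ ^ α) : ℂ) * u p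

/-- `u` is (real-valued and) pointwise positive. -/
def IsPositive {d m : ℕ} (u : Pt d m → ℂ) : Prop :=
  ∀ p, 0 < (u p).re ∧ (u p).im = 0

/-- The mass-preserving scaling `v^t(x,y) = t^{d/2} u(tx, y)`. -/
def scaleX (d m : ℕ) (t : ℝ) (u : Pt d m → ℂ) : Pt d m → ℂ :=
  fun p => (↑(t ^ ((d : ℝ) / 2)) : ℂ) * u (t • p.1, p.2)

/-- `Q` is the (radial, positive) ground state of `-Δ Q + Q = Q^{1+4/d}` on `ℝ^d`. -/
def IsGroundStateQ (d : ℕ) (Q : Pt d 0 → ℂ) : Prop :=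
  InH1 d 0 (4 / (d : ℝ)) Q ∧ IsPositive Q ∧
  (∀ p q : Pt d 0, ∑ i, (p.1 i) ^ 2 = ∑ i, (q.1 i) ^ 2 → Q p = Q q) ∧
  SolvesStat d 0 (4 / (d : ℝ)) 1 Q

/-- The squared `H¹` norm. -/
def H1normSq (d m : ℕ) (u : Pt d m → ℂ) : ℝ :=
  Mass d m u + gradXsq d m u + gradYsq d m u

/-- `u : ℝ → H¹` solves the focusing NLS `i∂_t u + Δ_{x,y} u = -|u|^α u` on
the time interval `I`. -/
def IsNLSSolutionOn (d m : ℕ) (α : ℝ) (I : Set ℝ) (u : ℝ → Pt d m → ℂ) : Prop :=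
  (∀ t ∈ I, InH1 d m α (u t)) ∧
  ∀ t ∈ I, ∀ p, Complex.I * deriv (fun s => u s p) t + lap (u t) p
      = -((↑(‖u t p‖ ^ α) : ℂ) * u t p)

/-- `u` is a solution of the focusing NLS on the maximal (open, connected)
time interval `I ∋ 0`. -/
def IsMaximalNLSSolution (d m : ℕ) (α : ℝ) (I : Set ℝ) (u : ℝ → Pt d m → ℂ) : Prop :=
  IsOpen I ∧ (0 : ℝ) ∈ I ∧ IsPreconnected I ∧ IsNLSSolutionOn d m α I u ∧
  ∀ (J : Set ℝ) (v : ℝ → Pt d m → ℂ), IsOpen J → IsPreconnected J → I ⊆ J →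
    IsNLSSolutionOn d m α J v → (∀ t ∈ I, v t = u t) → J = I

/-- `v` is a global solution of the linear Schrödinger equation
`i∂_t v + Δ_{x,y} v = 0` (so that `v t = e^{itΔ} (v 0)`). -/
def IsLinearSolution (d m : ℕ) (v : ℝ → Pt d m → ℂ) : Prop :=
  ∀ t p, Complex.I * deriv (fun s => v s p) t + lap (v t) p = 0

end NLS

/-!
Each constraint set dominates the other in action values, so the two infima coincide.

If `K(u) = 0`, the mass-preserving scaling `v = t^{d/2} u(t·, ·)` multiplies `‖∇ₓu‖²` by `t²` and
`‖u‖_{α+2}^{α+2}` by `t^s`, `s = dα/2 ≥ 2`, and fixes `M` and `‖∇_y u‖²`. Hence `N_ω(v)` is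
positive for small `t` and negative for large `t`, and Bernoulli's inequality
`t^s ≥ 1 + (s/2)(t² - 1)` gives `S_ω(v) ≤ S_ω(u)` for every `t > 0`.

If `N_ω(u) = 0` and `∇ₓu ≠ 0`, some multiple `λu` has `K = 0`, and on the Nehari ray
`λ ↦ S_ω(λu)` is maximal at `λ = 1`. If `∇ₓu = 0`, the phase `e^{iξx₁}` first creates
`‖∇ₓ‖² = ξ²M`; the multiple with `K = 0` then has action `O(λ²)` with `λ → 0` as `ξ → 0`, hence
below `S_ω(u) > 0`.
-/

namespace NLS

open Set

theorem one_add_half_mul_sq_sub_one_le_rpow {t s : ℝ} (ht : 0 ≤ t) (hs : 2 ≤ s) :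
    1 + s / 2 * (t ^ 2 - 1) ≤ t ^ s := by
  have h := one_add_mul_self_le_rpow_one_add (s := t ^ 2 - 1) (by nlinarith) (p := s / 2)
    (by linarith)
  have hpow : (t ^ 2) ^ (s / 2) = t ^ s := by
    rw [← Real.rpow_natCast, ← Real.rpow_mul ht]
    congr 1
    push_cast
    ring
  rw [add_sub_cancel, hpow] at h
  linarith

theorem sq_div_two_sub_rpow_div_le {t s : ℝ} (ht : 0 ≤ t) (hs : 2 ≤ s) :
    t ^ 2 / 2 - t ^ s / s ≤ 1 / 2 - 1 / s := by
  have h := one_add_half_mul_sq_sub_one_le_rpow ht hs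
  have hs0 : s ≠ 0 := by positivity
  have key : 1 / 2 - 1 / s - (t ^ 2 / 2 - t ^ s / s)
      = (t ^ s - (1 + s / 2 * (t ^ 2 - 1))) / s := by
    field_simp
    ring
  rw [← sub_nonneg, key]
  exact div_nonneg (sub_nonneg.2 h) (by positivity)

theorem exists_pos_add_sq_mul_eq_rpow_mul {A a s P : ℝ} (hA : 0 < A) (hs : 2 ≤ s) (hP : 0 < P)
    (ha : 2 * a < s * P) : ∃ t > 0, A + t ^ 2 * a = t ^ s * P := by
  set g : ℝ → ℝ := fun t => A + t ^ 2 * a - t ^ s * P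
  have hg : Continuous g := by
    have := Real.continuous_rpow_const (q := s) (by linarith)
    fun_prop
  have hg0 : 0 < g 0 := by simpa [g, Real.zero_rpow (by linarith : s ≠ 0)] using hA
  have hδ : 0 < s / 2 * P - a := by linarith
  obtain ⟨T, hT, hTpos⟩ := (((tendsto_pow_atTop two_ne_zero).eventually_gt_atTop
    ((A - P + s / 2 * P) / (s / 2 * P - a))).and (Filter.eventually_gt_atTop 0)).exists
  have hgT : g T < 0 := by
    have hbern := mul_le_mul_of_nonneg_left
      (one_add_half_mul_sq_sub_one_le_rpow hTpos.le hs) hP.le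
    rw [div_lt_iff₀ hδ] at hT
    simp only [g]
    nlinarith
  obtain ⟨t, ⟨ht0, -⟩, hgt⟩ :=
    intermediate_value_Ioo' hTpos.le hg.continuousOn ⟨hgT, hg0⟩
  exact ⟨t, ht0, by simpa [g, sub_eq_zero] using hgt⟩

variable {d m : ℕ} {α ω : ℝ} {u : Pt d m → ℂ}

lemma gradXsq_nonneg (u : Pt d m → ℂ) : 0 ≤ gradXsq d m u :=
  integral_nonneg fun _ => by positivity

lemma gradYsq_nonneg (u : Pt d m → ℂ) : 0 ≤ gradYsq d m u :=
  integral_nonneg fun _ => by positivity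

lemma exists_mem_fundDom_ne_zero (hu : IsPeriodic u) (h : u ≠ 0) :
    ∃ q ∈ fundDom d m, u q ≠ 0 := by
  obtain ⟨p, hp⟩ : ∃ p, u p ≠ 0 := Function.ne_iff.1 h
  have h2π : (0 : ℝ) < 2 * π := by positivity
  refine ⟨(p.1, fun j => toIcoMod h2π 0 (p.2 j)), ⟨mem_univ _, fun j _ => ?_⟩, ?_⟩
  · simpa using toIcoMod_mem_Ico h2π 0 (p.2 j)
  · rw [← hu _ fun j => toIcoDiv h2π 0 (p.2 j)]
    convert hp
    ext j
    simpa [mul_comm] using toIcoMod_add_toIcoDiv_zsmul h2π 0 (p.2 j)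

lemma fundDom_subset_closure_interior : fundDom d m ⊆ closure (interior (fundDom d m)) := by
  rw [fundDom, interior_prod_eq, interior_pi_set finite_univ, closure_prod_eq,
    closure_pi_set]
  simp only [interior_univ, closure_univ, interior_Ico]
  refine prod_mono subset_rfl (pi_mono fun j _ => ?_)
  rw [closure_Ioo (by positivity)]
  exact Ico_subset_Icc_self

lemma μw_pos_of_isOpen {U : Set (Pt d m)} (hU : IsOpen U) (h : (U ∩ fundDom d m).Nonempty) :
    0 < μw d m U := by
  have hne : (interior (fundDom d m) ∩ U).Nonempty := (closure_inter_open_nonempty_iff hU).1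
    (h.mono fun p hp => ⟨fundDom_subset_closure_interior hp.2, hp.1⟩)
  calc 0 < volume (interior (fundDom d m) ∩ U) := (isOpen_interior.inter hU).measure_pos _ hne
    _ ≤ volume (U ∩ fundDom d m) := measure_mono fun p hp => ⟨hp.2, interior_subset hp.1⟩
    _ ≤ μw d m U := Measure.le_restrict_apply _ _

lemma integral_pos_of_continuous {g : Pt d m → ℝ} (hg : Continuous g) (hg0 : 0 ≤ g)
    (hgi : Integrable g (μw d m)) {q : Pt d m} (hq : q ∈ fundDom d m) (hgq : g q ≠ 0) :
    0 < ∫ p, g p ∂μw d m := by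
  rw [integral_pos_iff_support_of_nonneg hg0 hgi]
  exact μw_pos_of_isOpen hg.isOpen_support ⟨q, hgq, hq⟩

lemma mass_pos (hu : InH1 d m α u) (h : u ≠ 0) : 0 < Mass d m u := by
  obtain ⟨q, hq, hq0⟩ := exists_mem_fundDom_ne_zero hu.periodic h
  exact integral_pos_of_continuous (hu.diff.continuous.norm.pow 2) (fun p => by positivity)
    hu.memL2 hq (by simpa using hq0)

lemma pot_pos (hα : 0 ≤ α + 2) (hu : InH1 d m α u) (h : u ≠ 0) : 0 < Pot d m α u := by
  obtain ⟨q, hq, hq0⟩ := exists_mem_fundDom_ne_zero hu.periodic h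
  exact integral_pos_of_continuous (hu.diff.continuous.norm.rpow_const fun _ => Or.inr hα)
    (fun p => by positivity) hu.memLp hq (by positivity)

section Smul

variable (c : ℝ)

lemma dX_smul (p : Pt d m) (i : Fin d) : dX (c • u) p i = c • dX u p i := by
  simp [dX, fderiv_const_smul_field]

lemma dY_smul (p : Pt d m) (j : Fin m) : dY (c • u) p j = c • dY u p j := by
  simp [dY, fderiv_const_smul_field]

lemma mass_smul : Mass d m (c • u) = c ^ 2 * Mass d m u := by
  simp_rw [Mass, ← integral_const_mul, Pi.smul_apply, norm_smul, mul_pow, Real.norm_eq_abs,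
    sq_abs]

lemma gradXsq_smul : gradXsq d m (c • u) = c ^ 2 * gradXsq d m u := by
  simp_rw [gradXsq, ← integral_const_mul, Finset.mul_sum, dX_smul, norm_smul, mul_pow,
    Real.norm_eq_abs, sq_abs]

lemma gradYsq_smul : gradYsq d m (c • u) = c ^ 2 * gradYsq d m u := by
  simp_rw [gradYsq, ← integral_const_mul, Finset.mul_sum, dY_smul, norm_smul, mul_pow,
    Real.norm_eq_abs, sq_abs]

lemma pot_smul : Pot d m α (c • u) = |c| ^ (α + 2) * Pot d m α u := by
  simp_rw [Pot, ← integral_const_mul, Pi.smul_apply, norm_smul, Real.norm_eq_abs,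
    Real.mul_rpow (abs_nonneg c) (norm_nonneg _)]

lemma InH1.smul (hu : InH1 d m α u) : InH1 d m α (c • u) where
  diff := hu.diff.const_smul c
  periodic p k := by simp [hu.periodic p k]
  memL2 := by
    simpa [norm_smul, mul_pow] using hu.memL2.const_mul (c ^ 2)
  memGradL2 := by
    simpa [fderiv_const_smul_field, norm_smul, mul_pow] using hu.memGradL2.const_mul (c ^ 2)
  memLp := by
    simpa [norm_smul, Real.mul_rpow] using hu.memLp.const_mul (|c| ^ (α + 2))

lemma kw_smul (hc : 0 < c) : Kw d m α (c • u)
    = c ^ 2 * (gradXsq d m u - α * d / (2 * (α + 2)) * c ^ α * Pot d m α u) := by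
  rw [Kw, gradXsq_smul, pot_smul, abs_of_pos hc, Real.rpow_add hc, Real.rpow_two]
  ring

lemma sw_smul (hc : 0 ≤ c) : Sw d m α ω (c • u) = c ^ 2 * (ω * Mass d m u + gradXsq d m u
    + gradYsq d m u) / 2 - c ^ (α + 2) * Pot d m α u / (α + 2) := by
  rw [Sw, En, gradXsq_smul, gradYsq_smul, pot_smul, mass_smul, abs_of_nonneg hc]
  ring

end Smul

lemma integrable_sq_norm_fderiv_of_le {v : Pt d m → ℂ} {g : Pt d m → ℝ}
    (hg : MemLp g 2 (μw d m)) (h : ∀ p, ‖fderiv ℝ v p‖ ≤ g p) :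
    Integrable (fun p => ‖fderiv ℝ v p‖ ^ 2) (μw d m) := by
  have hmeas : AEStronglyMeasurable (fderiv ℝ v) (μw d m) :=
    (measurable_fderiv ℝ v).aestronglyMeasurable
  exact (memLp_two_iff_integrable_sq_norm hmeas).1
    (hg.of_le hmeas (ae_of_all _ fun p => (h p).trans (le_abs_self _)))

section ScaleX

variable {t : ℝ}

def scaleCLM (d m : ℕ) (t : ℝ) : Pt d m →L[ℝ] Pt d m :=
  (t • ContinuousLinearMap.id ℝ (Fin d → ℝ)).prodMap (ContinuousLinearMap.id ℝ (Fin m → ℝ))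

@[simp]
lemma scaleCLM_apply (p : Pt d m) : scaleCLM d m t p = (t • p.1, p.2) := rfl

lemma measurableEmbedding_scaleCLM (ht : t ≠ 0) : MeasurableEmbedding (scaleCLM d m t) :=
  (measurableEmbedding_const_smul₀ ht).prodMap MeasurableEmbedding.id

lemma map_scaleCLM_μw (ht : 0 < t) :
    (μw d m).map (scaleCLM d m t) = ENNReal.ofReal (t ^ d)⁻¹ • μw d m := by
  have hμw : μw d m = (volume : Measure (Fin d → ℝ)).prod
      (volume.restrict (Set.univ.pi fun _ => Set.Ico (0 : ℝ) (2 * π))) := by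
    rw [μw, fundDom, Measure.volume_eq_prod, ← Measure.prod_restrict, Measure.restrict_univ]
  have hmap : (volume : Measure (Fin d → ℝ)).map (t • ·)
      = ENNReal.ofReal (t ^ d)⁻¹ • volume := by
    rw [Measure.map_addHaar_smul _ ht.ne', Module.finrank_fin_fun, abs_of_pos (by positivity)]
  rw [hμw, show ⇑(scaleCLM d m t) = Prod.map (t • ·) id from rfl,
    ← Measure.map_prod_map _ _ (measurable_const_smul t) measurable_id, Measure.map_id, hmap,
    Measure.prod_smul_left]

lemma integral_comp_scaleCLM (ht : 0 < t) (g : Pt d m → ℝ) :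
    ∫ p, g (t • p.1, p.2) ∂μw d m = (t ^ d)⁻¹ * ∫ p, g p ∂μw d m := by
  have h := (measurableEmbedding_scaleCLM (d := d) (m := m) ht.ne').integral_map
    (μ := μw d m) g
  rw [map_scaleCLM_μw ht, integral_smul_measure, ENNReal.toReal_ofReal (by positivity),
    smul_eq_mul] at h
  exact h.symm

lemma integrable_comp_scaleCLM (ht : 0 < t) {g : Pt d m → ℝ} (hg : Integrable g (μw d m)) :
    Integrable (fun p => g (t • p.1, p.2)) (μw d m) := by
  refine (measurableEmbedding_scaleCLM ht.ne').integrable_map_iff.1 ?_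
  rw [map_scaleCLM_μw ht]
  exact hg.smul_measure ENNReal.ofReal_ne_top

lemma hasFDerivAt_scaleX (hu : Differentiable ℝ u) (p : Pt d m) :
    HasFDerivAt (scaleX d m t u)
      (((t ^ ((d : ℝ) / 2) : ℝ) : ℂ) • (fderiv ℝ u (t • p.1, p.2)).comp (scaleCLM d m t))
      p :=
  ((hu _).hasFDerivAt.comp p (scaleCLM d m t).hasFDerivAt).const_mul _

lemma dX_scaleX (hu : Differentiable ℝ u) (p : Pt d m) (i : Fin d) :
    dX (scaleX d m t u) p i
      = ((t ^ ((d : ℝ) / 2) : ℝ) : ℂ) * (t * dX u (t • p.1, p.2) i) := by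
  have h : scaleCLM d m t (Pi.single i 1, 0) = t • ((Pi.single i 1, 0) : Pt d m) := by simp
  rw [dX, (hasFDerivAt_scaleX hu p).fderiv, smul_apply,
    ContinuousLinearMap.comp_apply, h, map_smul, dX, Complex.real_smul, smul_eq_mul]

lemma dY_scaleX (hu : Differentiable ℝ u) (p : Pt d m) (j : Fin m) :
    dY (scaleX d m t u) p j = ((t ^ ((d : ℝ) / 2) : ℝ) : ℂ) * dY u (t • p.1, p.2) j := by
  have h : scaleCLM d m t (0, Pi.single j 1) = ((0, Pi.single j 1) : Pt d m) := by simp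
  rw [dY, (hasFDerivAt_scaleX hu p).fderiv, smul_apply,
    ContinuousLinearMap.comp_apply, h, dY, smul_eq_mul]

lemma sq_rpow_half (ht : 0 < t) : (t ^ ((d : ℝ) / 2)) ^ 2 = t ^ d := by
  rw [← Real.rpow_natCast _ 2, ← Real.rpow_mul ht.le, ← Real.rpow_natCast]
  congr 1
  push_cast
  ring

lemma mass_scaleX (ht : 0 < t) : Mass d m (scaleX d m t u) = Mass d m u := by
  simp_rw [Mass, scaleX, norm_mul, Complex.norm_real, mul_pow, integral_const_mul,
    integral_comp_scaleCLM ht fun q => ‖u q‖ ^ 2, Real.norm_eq_abs, sq_abs, sq_rpow_half ht]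
  field_simp

lemma gradXsq_scaleX (hu : Differentiable ℝ u) (ht : 0 < t) :
    gradXsq d m (scaleX d m t u) = t ^ 2 * gradXsq d m u := by
  simp_rw [gradXsq, dX_scaleX hu, norm_mul, Complex.norm_real, mul_pow, ← Finset.mul_sum,
    integral_const_mul, integral_comp_scaleCLM ht fun q => ∑ i, ‖dX u q i‖ ^ 2,
    Real.norm_eq_abs, sq_abs, sq_rpow_half ht]
  field_simp

lemma gradYsq_scaleX (hu : Differentiable ℝ u) (ht : 0 < t) :
    gradYsq d m (scaleX d m t u) = gradYsq d m u := by
  simp_rw [gradYsq, dY_scaleX hu, norm_mul, Complex.norm_real, mul_pow, ← Finset.mul_sum,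
    integral_const_mul, integral_comp_scaleCLM ht fun q => ∑ j, ‖dY u q j‖ ^ 2,
    Real.norm_eq_abs, sq_abs, sq_rpow_half ht]
  field_simp

lemma pot_scaleX (ht : 0 < t) :
    Pot d m α (scaleX d m t u) = t ^ ((d : ℝ) * α / 2) * Pot d m α u := by
  simp_rw [Pot, scaleX, norm_mul, Complex.norm_real, Real.norm_eq_abs,
    Real.mul_rpow (abs_nonneg _) (norm_nonneg _), integral_const_mul,
    integral_comp_scaleCLM ht fun q => ‖u q‖ ^ (α + 2), ← mul_assoc]
  congr 1
  rw [abs_of_pos (by positivity), ← Real.rpow_mul ht.le, ← Real.rpow_natCast,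
    ← Real.rpow_neg ht.le, ← Real.rpow_add ht]
  ring_nf

lemma InH1.scaleX (hu : InH1 d m α u) (ht : 0 < t) : InH1 d m α (scaleX d m t u) := by
  have hc : 0 < t ^ ((d : ℝ) / 2) := by positivity
  refine ⟨fun p => (hasFDerivAt_scaleX hu.diff p).differentiableAt,
    fun p k => congrArg (_ * ·) (hu.periodic (t • p.1, p.2) k), ?_, ?_, ?_⟩
  · simpa [NLS.scaleX, norm_mul, mul_pow, abs_of_pos hc] using
      (integrable_comp_scaleCLM ht hu.memL2).const_mul ((t ^ ((d : ℝ) / 2)) ^ 2)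
  · have hmeas : AEStronglyMeasurable (fun p => ‖fderiv ℝ u (t • p.1, p.2)‖) (μw d m) :=
      ((measurable_fderiv ℝ u).norm.comp (scaleCLM d m t).measurable).aestronglyMeasurable
    have hDu := (memLp_two_iff_integrable_sq hmeas).2 (integrable_comp_scaleCLM ht hu.memGradL2)
    refine integrable_sq_norm_fderiv_of_le
      (hDu.const_mul (t ^ ((d : ℝ) / 2) * ‖scaleCLM d m t‖)) fun p => ?_
    rw [(hasFDerivAt_scaleX hu.diff p).fderiv, norm_smul, Complex.norm_real, Real.norm_eq_abs,
      abs_of_pos hc, mul_assoc]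
    gcongr
    exact (ContinuousLinearMap.opNorm_comp_le _ _).trans_eq (mul_comm _ _)
  · simpa [NLS.scaleX, norm_mul, Real.mul_rpow hc.le, abs_of_pos hc] using
      (integrable_comp_scaleCLM ht hu.memLp).const_mul ((t ^ ((d : ℝ) / 2)) ^ (α + 2))

lemma scaleX_ne_zero (ht : 0 < t) (h : u ≠ 0) : scaleX d m t u ≠ 0 := by
  obtain ⟨p, hp⟩ : ∃ p, u p ≠ 0 := Function.ne_iff.1 h
  refine Function.ne_iff.2 ⟨(t⁻¹ • p.1, p.2), ?_⟩
  simp [NLS.scaleX, smul_inv_smul₀ ht.ne', hp, (Real.rpow_pos_of_pos ht _).ne']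

end ScaleX

lemma norm_dX_le (p : Pt d m) (k : Fin d) : ‖dX u p k‖ ≤ ‖fderiv ℝ u p‖ :=
  (ContinuousLinearMap.le_opNorm _ _).trans
    (mul_le_of_le_one_right (norm_nonneg _) (by simp [Pi.norm_single]))

lemma integrable_sum_norm_dX_sq (hu : InH1 d m α u) :
    Integrable (fun p => ∑ k, ‖dX u p k‖ ^ 2) (μw d m) :=
  integrable_finsetSum _ fun k _ => hu.memGradL2.mono'
    ((measurable_fderiv_apply_const ℝ u _).norm.pow_const 2).aestronglyMeasurable
    (ae_of_all _ fun p => by simpa using pow_le_pow_left₀ (norm_nonneg _) (norm_dX_le p k) 2)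

lemma ae_dX_eq_zero (hu : InH1 d m α u) (h : gradXsq d m u = 0) :
    ∀ᵐ p ∂μw d m, ∀ k, dX u p k = 0 := by
  filter_upwards [(integral_eq_zero_iff_of_nonneg (fun p => by positivity)
    (integrable_sum_norm_dX_sq hu)).1 h] with p hp
  simpa [Finset.sum_eq_zero_iff_of_nonneg] using hp

section Modulation

variable {ξ : ℝ} {i : Fin d}

def phase (d m : ℕ) (ξ : ℝ) (i : Fin d) : Pt d m →L[ℝ] ℂ :=
  (ξ * Complex.I) • Complex.ofRealCLM.comp
    ((ContinuousLinearMap.proj i).comp (ContinuousLinearMap.fst ℝ _ _))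

def modulate (ξ : ℝ) (i : Fin d) (u : Pt d m → ℂ) : Pt d m → ℂ :=
  fun p => Complex.exp (phase d m ξ i p) * u p

@[simp]
lemma phase_apply (p : Pt d m) : phase d m ξ i p = ξ * Complex.I * p.1 i := by
  simp [phase]

lemma norm_exp_phase (p : Pt d m) : ‖Complex.exp (phase d m ξ i p)‖ = 1 := by
  simp [Complex.norm_exp]

lemma norm_modulate (p : Pt d m) : ‖modulate ξ i u p‖ = ‖u p‖ := by
  rw [modulate, norm_mul, norm_exp_phase, one_mul]

lemma hasFDerivAt_modulate (hu : Differentiable ℝ u) (p : Pt d m) :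
    HasFDerivAt (modulate ξ i u)
      (Complex.exp (phase d m ξ i p) • fderiv ℝ u p
        + u p • Complex.exp (phase d m ξ i p) • phase d m ξ i) p :=
  (phase d m ξ i).hasFDerivAt.cexp.mul (hu p).hasFDerivAt

lemma dX_modulate (hu : Differentiable ℝ u) (p : Pt d m) (k : Fin d) :
    dX (modulate ξ i u) p k = Complex.exp (phase d m ξ i p)
      * (dX u p k + u p * phase d m ξ i (Pi.single k 1, 0)) := by
  rw [dX, (hasFDerivAt_modulate hu p).fderiv, dX]
  simp only [add_apply, smul_apply, smul_eq_mul]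
  ring

lemma dY_modulate (hu : Differentiable ℝ u) (p : Pt d m) (j : Fin m) :
    dY (modulate ξ i u) p j = Complex.exp (phase d m ξ i p) * dY u p j := by
  rw [dY, (hasFDerivAt_modulate hu p).fderiv, dY]
  simp

lemma sum_norm_phase_sq : ∑ k, ‖phase d m ξ i (Pi.single k 1, 0)‖ ^ 2 = ξ ^ 2 := by
  simp [Pi.single_apply, mul_pow]

lemma mass_modulate : Mass d m (modulate ξ i u) = Mass d m u := by
  simp_rw [Mass, norm_modulate]

lemma pot_modulate : Pot d m α (modulate ξ i u) = Pot d m α u := by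
  simp_rw [Pot, norm_modulate]

lemma gradYsq_modulate (hu : Differentiable ℝ u) :
    gradYsq d m (modulate ξ i u) = gradYsq d m u := by
  simp_rw [gradYsq, dY_modulate hu, norm_mul, norm_exp_phase, one_mul]

lemma InH1.modulate (hu : InH1 d m α u) : InH1 d m α (modulate ξ i u) where
  diff p := (hasFDerivAt_modulate hu.diff p).differentiableAt
  periodic p k := by simp [NLS.modulate, hu.periodic p k]
  memL2 := by simpa only [norm_modulate] using hu.memL2
  memGradL2 := by
    have hDu := (memLp_two_iff_integrable_sq_norm
      (measurable_fderiv ℝ u).aestronglyMeasurable).2 hu.memGradL2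
    have hu2 := (memLp_two_iff_integrable_sq_norm hu.diff.continuous.aestronglyMeasurable).2
      hu.memL2
    refine integrable_sq_norm_fderiv_of_le (hDu.norm.add (hu2.norm.mul_const ‖phase d m ξ i‖))
      fun p => ?_
    rw [(hasFDerivAt_modulate hu.diff p).fderiv]
    refine (norm_add_le _ _).trans ?_
    simp only [norm_smul, norm_exp_phase, one_mul, Pi.add_apply]
    rfl
  memLp := by simpa only [norm_modulate] using hu.memLp

lemma modulate_ne_zero (h : u ≠ 0) : modulate ξ i u ≠ 0 := by
  obtain ⟨p, hp⟩ : ∃ p, u p ≠ 0 := Function.ne_iff.1 h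
  exact Function.ne_iff.2 ⟨p, by simp [NLS.modulate, hp]⟩

lemma gradXsq_modulate_of_gradXsq_eq_zero (hu : InH1 d m α u) (h : gradXsq d m u = 0) :
    gradXsq d m (modulate ξ i u) = ξ ^ 2 * Mass d m u := by
  rw [gradXsq, Mass, ← integral_const_mul]
  refine integral_congr_ae ?_
  filter_upwards [ae_dX_eq_zero hu h] with p hp
  simp_rw [dX_modulate hu.diff, hp, zero_add, norm_mul, norm_exp_phase, one_mul, mul_pow,
    ← Finset.mul_sum, sum_norm_phase_sq, mul_comm]

end Modulation

lemma exists_betaSet_le_of_kw_eq_zero (hαd : 4 ≤ α * d) (hω : 0 < ω) (hu : InH1 d m α u)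
    (hu0 : u ≠ 0) (hK : Kw d m α u = 0) : ∃ r ∈ betaSet d m α ω, r ≤ Sw d m α ω u := by
  have hα : 0 < α := by
    by_contra! h
    nlinarith [(Nat.cast_nonneg d : (0 : ℝ) ≤ d)]
  obtain ⟨s, hs_def⟩ : ∃ s, s = (d : ℝ) * α / 2 := ⟨_, rfl⟩
  have hs : 2 ≤ s := by rw [hs_def]; linarith
  have hM := mass_pos hu hu0
  have hP := pot_pos (by linarith) hu hu0
  have hb := gradYsq_nonneg u
  have ha : gradXsq d m u = s / (α + 2) * Pot d m α u := by
    rw [Kw, sub_eq_zero] at hK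
    rw [hK, hs_def]
    field_simp
  obtain ⟨t, ht, hroot⟩ := exists_pos_add_sq_mul_eq_rpow_mul
    (A := ω * Mass d m u + gradYsq d m u) (a := gradXsq d m u) (by positivity) hs hP (by
      have : s / (α + 2) < s / 2 := div_lt_div_of_pos_left (by linarith) two_pos (by linarith)
      rw [ha]
      nlinarith)
  refine ⟨_, ⟨scaleX d m t u, ⟨hu.scaleX ht, scaleX_ne_zero ht hu0, ?_⟩, rfl⟩, ?_⟩
  · rw [Nw, mass_scaleX ht, gradXsq_scaleX hu.diff ht, gradYsq_scaleX hu.diff ht, pot_scaleX ht,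
      ← hs_def]
    linarith
  · have hbern := mul_le_mul_of_nonneg_left (one_add_half_mul_sq_sub_one_le_rpow ht.le hs)
      (div_pos hP (by linarith : (0 : ℝ) < α + 2)).le
    rw [Sw, En, Sw, En, mass_scaleX ht, gradXsq_scaleX hu.diff ht, gradYsq_scaleX hu.diff ht,
      pot_scaleX ht, ← hs_def, ha]
    linear_combination hbern

lemma exists_gammaSet_le_of_nw_eq_zero_of_gradXsq_pos (hα : 0 < α) (hd : 0 < d)
    (hu : InH1 d m α u) (hu0 : u ≠ 0) (hN : Nw d m α ω u = 0) (ha : 0 < gradXsq d m u) :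
    ∃ r ∈ gammaSet d m α ω, r ≤ Sw d m α ω u := by
  obtain ⟨κ, hκ_def⟩ : ∃ κ, κ = α * d / (2 * (α + 2)) := ⟨_, rfl⟩
  have hκ : 0 < κ := by rw [hκ_def]; positivity
  have hP := pot_pos (by linarith) hu hu0
  set l := (gradXsq d m u / (κ * Pot d m α u)) ^ α⁻¹
  have hl : 0 < l := by positivity
  have hlα : l ^ α = gradXsq d m u / (κ * Pot d m α u) :=
    Real.rpow_inv_rpow (by positivity) hα.ne'
  refine ⟨_, ⟨l • u, ⟨hu.smul l, smul_ne_zero hl.ne' hu0, ?_⟩, rfl⟩, ?_⟩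
  · rw [kw_smul l hl, ← hκ_def, hlα]
    field_simp
    ring
  · have hyoung := mul_le_mul_of_nonneg_left
      (sq_div_two_sub_rpow_div_le hl.le (by linarith : 2 ≤ α + 2)) hP.le
    rw [Nw, sub_eq_zero] at hN
    rw [sw_smul l hl.le, hN, Sw, En]
    linear_combination hyoung - (1 / 2 : ℝ) * hN

lemma exists_gammaSet_le_of_nw_eq_zero_of_gradXsq_eq_zero (hα : 0 < α) (hd : 0 < d)
    (hu : InH1 d m α u) (hu0 : u ≠ 0) (hN : Nw d m α ω u = 0)
    (ha : gradXsq d m u = 0) : ∃ r ∈ gammaSet d m α ω, r ≤ Sw d m α ω u := by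
  obtain ⟨κ, hκ_def⟩ : ∃ κ, κ = α * d / (2 * (α + 2)) := ⟨_, rfl⟩
  have hκ : 0 < κ := by rw [hκ_def]; positivity
  have hM := mass_pos hu hu0
  have hPpos := pot_pos (by linarith) hu hu0
  have hP : Pot d m α u = ω * Mass d m u + gradYsq d m u := by
    rw [Nw, ha] at hN
    linarith
  have hS : 0 < Sw d m α ω u := by
    have hS_eq : Sw d m α ω u = Pot d m α u * (1 / 2 - 1 / (α + 2)) := by
      rw [Sw, En, ha, hP]
      ring
    rw [hS_eq]
    exact mul_pos hPpos (sub_pos.2 (one_div_lt_one_div_of_lt two_pos (by linarith)))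
  -- `F l` bounds the action of `l • w` once `ξ` is chosen so that `K(l • w) = 0`.
  set F : ℝ → ℝ := fun l =>
    l ^ 2 * (ω * Mass d m u + gradYsq d m u + κ * l ^ α * Pot d m α u) / 2
  have hF : Continuous F := by
    have := Real.continuous_rpow_const hα.le
    fun_prop
  have hFS : ∀ᶠ l in 𝓝[>] 0, F l < Sw d m α ω u :=
    ((hF.tendsto' 0 0 (by simp [F])).eventually (gt_mem_nhds hS)).filter_mono
      nhdsWithin_le_nhds
  obtain ⟨l, hlS, hl⟩ := (hFS.and self_mem_nhdsWithin).exists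
  set ξ := √(κ * l ^ α * Pot d m α u / Mass d m u)
  set w := modulate ξ ⟨0, hd⟩ u
  have hw : InH1 d m α w := hu.modulate
  have hwa : gradXsq d m w = κ * l ^ α * Pot d m α u := by
    rw [gradXsq_modulate_of_gradXsq_eq_zero hu ha, Real.sq_sqrt (by positivity),
      div_mul_cancel₀ _ hM.ne']
  refine ⟨_, ⟨l • w, ⟨hw.smul l, smul_ne_zero hl.ne' (modulate_ne_zero hu0), ?_⟩, rfl⟩, ?_⟩
  · rw [kw_smul l hl, ← hκ_def, hwa, pot_modulate, sub_self, mul_zero]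
  · refine le_trans ?_ hlS.le
    rw [sw_smul l hl.le, hwa, mass_modulate, gradYsq_modulate hu.diff, pot_modulate]
    have : 0 ≤ l ^ (α + 2) * Pot d m α u / (α + 2) := by positivity
    simp only [F]
    linarith

lemma exists_gammaSet_le_of_nw_eq_zero (hα : 0 < α) (hd : 0 < d) (hu : InH1 d m α u)
    (hu0 : u ≠ 0) (hN : Nw d m α ω u = 0) : ∃ r ∈ gammaSet d m α ω, r ≤ Sw d m α ω u := by
  rcases (gradXsq_nonneg u).eq_or_lt with ha | ha
  · exact exists_gammaSet_le_of_nw_eq_zero_of_gradXsq_eq_zero hα hd hu hu0 hN ha.symm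
  · exact exists_gammaSet_le_of_nw_eq_zero_of_gradXsq_pos hα hd hu hu0 hN ha

theorem gamma_eq_beta_general (d m : ℕ) (hd : 1 ≤ d) (α : ℝ) (hα₁ : 4 / (d : ℝ) ≤ α)
    (ω : ℝ) (hω : 0 < ω) :
    gamma d m α ω = beta d m α ω := by
  have hd' : (0 : ℝ) < d := by exact_mod_cast hd
  have hα : 0 < α := (div_pos four_pos hd').trans_le hα₁
  refine csInf_eq_csInf_of_forall_exists_le ?_ ?_
  · rintro _ ⟨u, ⟨hu, hu0, hK⟩, rfl⟩
    exact exists_betaSet_le_of_kw_eq_zero ((div_le_iff₀ hd').1 hα₁) hω hu hu0 hK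
  · rintro _ ⟨u, ⟨hu, hu0, hN⟩, rfl⟩
    exact exists_gammaSet_le_of_nw_eq_zero hα hd hu hu0 hN

/-- For every `ω ∈ (0,∞)`, `γ_ω = β_ω`. -/
theorem gamma_eq_beta (d m : ℕ) (hd : 1 ≤ d) (hm : m ≤ 1) (α : ℝ)
    (hα₁ : 4 / (d : ℝ) ≤ α) (hα₂ : 3 ≤ d + m → α < 4 / ((d : ℝ) + m - 2))
    (ω : ℝ) (hω : 0 < ω) :
    gamma d m α ω = beta d m α ω :=
  gamma_eq_beta_general d m hd α hα₁ ω hω
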